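/- (Factored form of the updated solution) Under the hypotheses of the rank bound, ψ can be written as ψ = Y Z^T with Y ∈ ℝ^{N_x × 2r} and Z ∈ ℝ^{N_Ω × 2r}, where the first r columns of Y are (K_j − K_{0,j}) − Σ_i X_i (S_{ij} − S₀_{ij}), the last r columns of Y are X_i, the first r columns of Z are W_j, and the last r columns of Z are L_i − L_{0,i} + Σ_j S₀_{ij} W_j, appropriately arranged. -/
import Mathlib


open Matrix

/-- Factored form of the updated DLR solution: `ψ = Y Zᵀ` with explicit factors of
width `2r`: the first `r` columns of `Y` are `(Kⱼ−K₀ⱼ) − ∑ᵢ (Sᵢⱼ−S₀ᵢⱼ) Xᵢ`, the last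
`r` columns of `Y` are the `Xᵢ`, the first `r` columns of `Z` are the `Wⱼ`, and the
last `r` columns of `Z` are `Lᵢ − L₀ᵢ + ∑ⱼ S₀ᵢⱼ Wⱼ`. -/
theorem stmt13 {Nx NΩ r : ℕ}
    (X K K0 : Fin r → (Fin Nx → ℝ)) (W L L0 : Fin r → (Fin NΩ → ℝ))
    (S S0 : Matrix (Fin r) (Fin r) ℝ)
    (ψ0 ψ : Matrix (Fin Nx) (Fin NΩ) ℝ)
    (hψ0 : ψ0 = ∑ i, ∑ j, S0 i j • vecMulVec (X i) (W j))
    (hK0 : ∀ j, K0 j = ∑ i, S0 i j • X i)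
    (hL0 : ∀ i, L0 i = ∑ j, S0 i j • W j)
    (hψ : ψ = ψ0 + (∑ j, vecMulVec (K j - K0 j) (W j))
      + (∑ i, vecMulVec (X i) (L i - L0 i))
      - ∑ i, ∑ j, (S i j - S0 i j) • vecMulVec (X i) (W j)) :
    ∃ Y : Matrix (Fin Nx) (Fin r ⊕ Fin r) ℝ, ∃ Z : Matrix (Fin NΩ) (Fin r ⊕ Fin r) ℝ,
      (∀ j x, Y x (Sum.inl j) = (K j - K0 j - ∑ i, (S i j - S0 i j) • X i) x) ∧
      (∀ i x, Y x (Sum.inr i) = X i x) ∧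
      (∀ j ω, Z ω (Sum.inl j) = W j ω) ∧
      (∀ i ω, Z ω (Sum.inr i) = (L i - L0 i + ∑ j, S0 i j • W j) ω) ∧
      ψ = Y * Zᵀ := by
  refine ⟨Matrix.of fun x => Sum.elim
      (fun j => (K j - K0 j - ∑ i, (S i j - S0 i j) • X i) x) (fun i => X i x),
    Matrix.of fun ω => Sum.elim (fun j => W j ω)
      (fun i => (L i - L0 i + ∑ j, S0 i j • W j) ω),
    fun j x => rfl, fun i x => rfl, fun j ω => rfl, fun i ω => rfl, ?_⟩
  subst hψ hψ0
  ext x ω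
  simp only [Matrix.mul_apply, Fintype.sum_sum_type, Matrix.of_apply, Sum.elim_inl,
    Sum.elim_inr, Matrix.transpose_apply, Matrix.sub_apply, Matrix.add_apply,
    Finset.sum_apply, Pi.smul_apply, Pi.sub_apply, Pi.add_apply, smul_eq_mul,
    vecMulVec_apply, Matrix.smul_apply, Matrix.sum_apply]
  rw [Finset.sum_congr rfl fun j _ => sub_mul (K j x - K0 j x) _ (W j ω),
    Finset.sum_congr rfl fun i _ => mul_add (X i x) _ _,
    Finset.sum_sub_distrib, Finset.sum_add_distrib,
    Finset.sum_congr rfl fun j _ => Finset.sum_mul .univ (fun i => (S i j - S0 i j) * X i x) (W j ω),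
    Finset.sum_congr rfl fun i _ => Finset.mul_sum .univ (fun j => S0 i j * W j ω) (X i x),
    Finset.sum_comm (f := fun j i => (S i j - S0 i j) * X i x * (W j ω))]
  ring_nf
  rw [Finset.sum_congr rfl fun i _ => Finset.sum_congr rfl fun j _ =>
    (by ring : S0 i j * X i x * W j ω = X i x * S0 i j * W j ω)]
  abel
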